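/- arXiv:1108.2949 — 3 statements merged into one kernel-verified Lean document; each statement's English description precedes it below -/
import Mathlib

section
/- Let c > 0 and let G be a k-sum of graphs G₁ and G₂, where Gᵢ has nᵢ vertices and contains at most c·nᵢ² cliques. If n₁ ≥ k²/2 + k and n₂ ≥ k + 1, and every clique of G is a clique of G₁ or of G₂, then G contains at most c·n² cliques, where n = n₁ + n₂ − k is the number of vertices of G. -/
/-- The number of cliques of a graph (including the empty clique). -/
noncomputable def cliqueCount {V : Type*} (G : SimpleGraph V) : ℕ :=
  Nat.card {s : Finset V // G.IsClique (s : Set V)}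

lemma cliqueCount_le_add {V : Type*} [Fintype V] (G : SimpleGraph V) (A B : Set V)
    (hcover : ∀ s : Set V, G.IsClique s → s ⊆ A ∨ s ⊆ B) :
    cliqueCount G ≤ cliqueCount (G.induce A) + cliqueCount (G.induce B) := by
  classical
  have key : ∀ (C : Set V) (s : Finset V), (↑s : Set V) ⊆ C → G.IsClique (↑s : Set V) →
      (G.induce C).IsClique (↑(s.preimage (Subtype.val : C → V)
        Subtype.val_injective.injOn) : Set C) := by
    intro C s hsub hs x hx y hy hxy
    simp only [Finset.coe_preimage, Set.mem_preimage] at hx hy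
    exact hs hx hy (fun h => hxy (Subtype.val_injective h))
  set f : {s : Finset V // G.IsClique (s : Set V)} →
      {s : Finset A // (G.induce A).IsClique (s : Set A)} ⊕
      {s : Finset B // (G.induce B).IsClique (s : Set B)} := fun s =>
    if h : (↑s.1 : Set V) ⊆ A then
      Sum.inl ⟨s.1.preimage Subtype.val Subtype.val_injective.injOn, key A s.1 h s.2⟩
    else
      Sum.inr ⟨s.1.preimage Subtype.val Subtype.val_injective.injOn,
        key B s.1 ((hcover s.1 s.2).resolve_left h) s.2⟩ with hf
  have hinj : Function.Injective f := by
    rintro ⟨s, hs⟩ ⟨t, ht⟩ heq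
    simp only [hf] at heq
    split_ifs at heq with h1 h2 h2
    · simp only [Sum.inl.injEq, Subtype.mk.injEq] at heq
      ext x
      constructor
      · intro hx
        have hxA : x ∈ A := h1 hx
        have := Finset.ext_iff.1 heq ⟨x, hxA⟩
        simp only [Finset.mem_preimage] at this
        exact this.1 hx
      · intro hx
        have hxA : x ∈ A := h2 hx
        have := Finset.ext_iff.1 heq ⟨x, hxA⟩
        simp only [Finset.mem_preimage] at this
        exact this.2 hx
    · have h1' := (hcover s hs).resolve_left h1
      have h2' := (hcover t ht).resolve_left h2
      simp only [Sum.inr.injEq, Subtype.mk.injEq] at heq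
      ext x
      constructor
      · intro hx
        have hxB : x ∈ B := h1' hx
        have := Finset.ext_iff.1 heq ⟨x, hxB⟩
        simp only [Finset.mem_preimage] at this
        exact this.1 hx
      · intro hx
        have hxB : x ∈ B := h2' hx
        have := Finset.ext_iff.1 heq ⟨x, hxB⟩
        simp only [Finset.mem_preimage] at this
        exact this.2 hx
  calc cliqueCount G ≤ Nat.card ({s : Finset A // (G.induce A).IsClique (s : Set A)} ⊕
      {s : Finset B // (G.induce B).IsClique (s : Set B)}) :=
        Nat.card_le_card_of_injective f hinj
    _ = cliqueCount (G.induce A) + cliqueCount (G.induce B) := Nat.card_sum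

/-- Clique bound for a `k`-sum: `G` is covered by two vertex sets `A` and `B`
(the images of the two summands `G₁` and `G₂`), every clique of `G` lies in `A` or `B`,
and the induced subgraphs on `A` and `B` have at most `c·n₁²` and `c·n₂²` cliques
respectively. Then `G` has at most `c·n²` cliques, where `n = n₁ + n₂ - k`. -/
theorem clique_count_k_sum {V : Type*} [Fintype V] (G : SimpleGraph V)
    (A B : Set V) (c : ℝ) (k n₁ n₂ : ℕ) (hc : 0 < c)
    (hn₁ : n₁ = Nat.card A) (hn₂ : n₂ = Nat.card B)
    (hk : Nat.card ↥(A ∩ B) = k)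
    (hcover : ∀ s : Set V, G.IsClique s → s ⊆ A ∨ s ⊆ B)
    (hA : (cliqueCount (G.induce A) : ℝ) ≤ c * n₁ ^ 2)
    (hB : (cliqueCount (G.induce B) : ℝ) ≤ c * n₂ ^ 2)
    (hsize₁ : (n₁ : ℝ) ≥ (k : ℝ) ^ 2 / 2 + k) (hsize₂ : (n₂ : ℝ) ≥ k + 1)
    (hn : (Fintype.card V : ℝ) = n₁ + n₂ - k) :
    (cliqueCount G : ℝ) ≤ c * (Fintype.card V : ℝ) ^ 2 := by
  have h1 : (cliqueCount G : ℝ) ≤ (cliqueCount (G.induce A) : ℝ) + cliqueCount (G.induce B) := by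
    exact_mod_cast cliqueCount_le_add G A B hcover
  have hk0 : (0:ℝ) ≤ (k:ℝ) := Nat.cast_nonneg k
  rw [hn]
  nlinarith [mul_nonneg hc.le (mul_nonneg (sub_nonneg.2 (by linarith : (k:ℝ)^2/2 + k ≤ (n₁:ℝ)))
      (sub_nonneg.2 (by linarith : (k:ℝ) + 1 ≤ (n₂:ℝ)))),
    mul_nonneg hc.le (mul_nonneg hk0 (sub_nonneg.2 (by linarith : (k:ℝ) + 1 ≤ (n₂:ℝ))))]
end

section
/- If every n-vertex graph that is h-almost bipartite or h-almost embeddable contains at most f(h)·n² cliques for some function f, and G is obtained by (≤ h)-sums from such graphs G₁,…,G_p where each Gᵢ contains no h-clique, then G contains at most f'(h)·n² cliques, where f'(h) = max{f(h), 2^{h²+2h}} and n = |V(G)|. -/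
/-- `Buildable G h Base S` : the induced subgraph of `G` on `S` can be obtained by
repeated `(≤ h)`-sums starting from pieces (induced on sets satisfying `Base`);
in a `(≤ h)`-sum the two parts overlap in at most `h` vertices and there is no edge
between the two private parts. -/
inductive Buildable {V : Type*} (G : SimpleGraph V) (h : ℕ) (Base : Set V → Prop) :
    Set V → Prop
  | base {S : Set V} : Base S → Buildable G h Base S
  | sum {A B : Set V} : Buildable G h Base A → Buildable G h Base B →
      Nat.card ↥(A ∩ B) ≤ h → (∀ x ∈ A \ B, ∀ y ∈ B \ A, ¬ G.Adj x y) →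
      Buildable G h Base (A ∪ B)

/-- Number of cliques of `G` contained in `S`. -/
noncomputable def cliquesIn {V : Type*} (G : SimpleGraph V) (S : Set V) : ℕ :=
  Nat.card {s : Finset V // ↑s ⊆ S ∧ G.IsClique (s : Set V)}

lemma isClique_induce_iff {V : Type*} (G : SimpleGraph V) (S : Set V) (s : Set ↥S) :
    (G.induce S).IsClique s ↔ G.IsClique (Subtype.val '' s) := by
  constructor
  · rintro hs x ⟨x', hx', rfl⟩ y ⟨y', hy', rfl⟩ hxy
    exact hs hx' hy' (fun h => hxy (by rw [h]))
  · intro hs x hx y hy hxy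
    exact hs ⟨x, hx, rfl⟩ ⟨y, hy, rfl⟩ (fun h => hxy (Subtype.val_injective h))

lemma subtype_map_of_subset {V : Type*} {S : Set V} [DecidablePred (· ∈ S)]
    {t : Finset V} (ht : ↑t ⊆ S) :
    (t.subtype (· ∈ S)).map (Function.Embedding.subtype _) = t := by
  rw [Finset.subtype_map]
  exact Finset.filter_true_of_mem (fun x hx => ht hx)

lemma cliqueCount_induce {V : Type*} (G : SimpleGraph V) (S : Set V) :
    cliqueCount (G.induce S) = cliquesIn G S := by
  classical
  refine Nat.card_eq_of_bijective (fun p =>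
    ⟨p.1.map (Function.Embedding.subtype _), ?_, ?_⟩) ⟨?_, ?_⟩
  · intro x hx
    simp only [Finset.coe_map, Function.Embedding.coe_subtype, Set.mem_image] at hx
    obtain ⟨y, _, rfl⟩ := hx
    exact y.2
  · have := (isClique_induce_iff G S ↑p.1).mp p.2
    simpa [Finset.coe_map] using this
  · intro p q hpq
    simp only [Subtype.mk_eq_mk, Finset.map_inj] at hpq
    exact Subtype.ext hpq
  · rintro ⟨t, htS, htc⟩
    refine ⟨⟨t.subtype (· ∈ S), ?_⟩, ?_⟩
    · rw [isClique_induce_iff]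
      have himg : Subtype.val '' (↑(t.subtype (· ∈ S)) : Set ↥S) = ↑t := by
        ext x
        constructor
        · rintro ⟨y, hy, rfl⟩
          exact Finset.mem_subtype.mp hy
        · intro hx
          exact ⟨⟨x, htS hx⟩, Finset.mem_subtype.mpr hx, rfl⟩
      rw [himg]
      exact htc
    · exact Subtype.ext (subtype_map_of_subset htS)

lemma one_le_cliquesIn {V : Type*} [Fintype V] (G : SimpleGraph V) (S : Set V) :
    1 ≤ cliquesIn G S := by
  classical
  have : Nonempty {s : Finset V // ↑s ⊆ S ∧ G.IsClique (s : Set V)} :=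
    ⟨⟨∅, by simp, by simp⟩⟩
  exact Nat.card_pos

lemma cliquesIn_le_two_pow {V : Type*} [Fintype V] (G : SimpleGraph V) (S : Set V) :
    cliquesIn G S ≤ 2 ^ Nat.card ↥S := by
  classical
  have h1 : cliquesIn G S ≤ Nat.card (Finset ↥S) := by
    apply Nat.card_le_card_of_injective (fun p => p.1.subtype (· ∈ S))
    intro p q hpq
    apply Subtype.ext
    have := congrArg (Finset.map (Function.Embedding.subtype (· ∈ S))) hpq
    rwa [subtype_map_of_subset p.2.1, subtype_map_of_subset q.2.1] at this
  haveI : Fintype ↥S := Fintype.ofFinite _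
  rwa [Nat.card_eq_fintype_card, Fintype.card_finset, ← Nat.card_eq_fintype_card] at h1

lemma cliquesIn_union_le {V : Type*} [Fintype V] (G : SimpleGraph V) {A B : Set V}
    (hd : ∀ x ∈ A \ B, ∀ y ∈ B \ A, ¬ G.Adj x y) :
    cliquesIn G (A ∪ B) ≤ cliquesIn G A + cliquesIn G B := by
  classical
  have key : ∀ p : {s : Finset V // ↑s ⊆ A ∪ B ∧ G.IsClique (s : Set V)},
      ¬ (↑p.1 : Set V) ⊆ A → (↑p.1 : Set V) ⊆ B := by
    rintro ⟨s, hsub, hcl⟩ hA y hy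
    obtain ⟨x, hxs, hxA⟩ := Set.not_subset.mp hA
    have hxB : x ∈ B := (hsub hxs).resolve_left hxA
    by_contra hyB
    have hyA : y ∈ A := (hsub hy).resolve_right hyB
    have hxy : y ≠ x := fun h => hxA (h ▸ hyA)
    exact hd y ⟨hyA, hyB⟩ x ⟨hxB, hxA⟩ (hcl hy hxs hxy)
  rw [cliquesIn, cliquesIn, cliquesIn, ← Nat.card_sum]
  apply Nat.card_le_card_of_injective (fun p =>
    if h : (↑p.1 : Set V) ⊆ A then Sum.inl ⟨p.1, h, p.2.2⟩
    else Sum.inr ⟨p.1, key p h, p.2.2⟩)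
  intro p q hpq
  dsimp only at hpq
  split_ifs at hpq with h1 h2 h2 <;>
    simp only [Sum.inl.injEq, Sum.inr.injEq, Subtype.mk_eq_mk, reduceCtorEq] at hpq <;>
    exact Subtype.ext hpq

lemma arith_key (a b k n : ℤ) (hsum : n + k = a + b) (hkb : k + 1 ≤ b)
    (h2a : k ^ 2 + 2 * k ≤ 2 * a) : a ^ 2 + b ^ 2 ≤ n ^ 2 := by
  have hn : n = a + b - k := by linarith
  subst hn
  nlinarith [mul_nonneg (sub_nonneg.2 h2a) (by linarith : (0:ℤ) ≤ b - k),
    mul_nonneg (sq_nonneg k) (by linarith : (0:ℤ) ≤ b - k - 1)]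


theorem clique_count_of_sums_aux {V : Type*} [Fintype V] (G : SimpleGraph V) (h : ℕ)
    (Base : Set V → Prop) (f : ℕ → ℝ)
    (hbound : ∀ S : Set V, Base S →
      (cliqueCount (G.induce S) : ℝ) ≤ f h * (Nat.card S : ℝ) ^ 2)
    {S : Set V} (hbuild : Buildable G h Base S) :
    1 ≤ Nat.card ↥S ∧
      (cliquesIn G S : ℝ) ≤ max (f h) (2 ^ (h ^ 2 + 2 * h) : ℝ) * (Nat.card ↥S : ℝ) ^ 2 := by
  set C : ℝ := max (f h) (2 ^ (h ^ 2 + 2 * h) : ℝ) with hC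
  have hC1 : (1 : ℝ) ≤ C := le_max_of_le_right (one_le_pow₀ one_le_two)
  induction hbuild with
  | @base S hS =>
      have hb := hbound S hS
      rw [cliqueCount_induce] at hb
      have hone : (1 : ℝ) ≤ (cliquesIn G S : ℝ) := by
        exact_mod_cast one_le_cliquesIn G S
      constructor
      · rcases Nat.eq_zero_or_pos (Nat.card ↥S) with h0 | h0
        · rw [h0] at hb; norm_num at hb
          have := one_le_cliquesIn G S; omega
        · exact h0
      · exact hb.trans (mul_le_mul_of_nonneg_right (le_max_left _ _) (by positivity))
  | @sum A B hA hB hk hd ihA ihB =>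
      obtain ⟨ha1, hNA⟩ := ihA
      obtain ⟨hb1, hNB⟩ := ihB
      set a := Nat.card ↥A with hadef
      set b := Nat.card ↥B with hbdef
      set k := Nat.card ↥(A ∩ B) with hkdef
      set n := Nat.card ↥(A ∪ B) with hndef
      have hsum : n + k = a + b := by
        rw [hndef, hkdef, hadef, hbdef]
        simp only [Nat.card_coe_set_eq]
        exact Set.ncard_union_add_ncard_inter A B (Set.toFinite A) (Set.toFinite B)
      have han : a ≤ n := by
        rw [hndef, hadef]
        simp only [Nat.card_coe_set_eq]
        exact Set.ncard_le_ncard Set.subset_union_left (Set.toFinite _)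
      have hn1 : 1 ≤ n := le_trans ha1 han
      have hNle := cliquesIn_union_le G hd
      by_cases hca : a ≤ k
      · have hAB : A ⊆ B := by
          rw [← Set.inter_eq_left]
          apply Set.eq_of_subset_of_ncard_le Set.inter_subset_left _ (Set.toFinite A)
          simpa only [← Nat.card_coe_set_eq] using hca
        have hU : A ∪ B = B := Set.union_eq_right.mpr hAB
        have hnb : n = b := congrArg (fun s : Set V => Nat.card ↥s) hU
        have hcq : cliquesIn G (A ∪ B) = cliquesIn G B := by rw [hU]
        rw [hnb, hcq]
        exact ⟨hb1, hNB⟩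
      by_cases hcb : b ≤ k
      · have hBA : B ⊆ A := by
          rw [← Set.inter_eq_right]
          apply Set.eq_of_subset_of_ncard_le Set.inter_subset_right _ (Set.toFinite B)
          simpa only [← Nat.card_coe_set_eq] using hcb
        have hU : A ∪ B = A := Set.union_eq_left.mpr hBA
        have hna : n = a := congrArg (fun s : Set V => Nat.card ↥s) hU
        have hcq : cliquesIn G (A ∪ B) = cliquesIn G A := by rw [hU]
        rw [hna, hcq]
        exact ⟨ha1, hNA⟩
      push_neg at hca hcb
      refine ⟨hn1, ?_⟩
      have hcast : (cliquesIn G (A ∪ B) : ℝ) ≤ (cliquesIn G A : ℝ) + (cliquesIn G B : ℝ) := by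
        exact_mod_cast hNle
      by_cases hbig : k ^ 2 + 2 * k ≤ 2 * a ∨ k ^ 2 + 2 * k ≤ 2 * b
      · have hab2 : (a : ℝ) ^ 2 + (b : ℝ) ^ 2 ≤ (n : ℝ) ^ 2 := by
          rcases hbig with h2a | h2b
          · have := arith_key (a : ℤ) b k n (by exact_mod_cast hsum)
              (by exact_mod_cast hcb) (by exact_mod_cast h2a)
            exact_mod_cast this
          · have := arith_key (b : ℤ) a k n (by exact_mod_cast (by omega : n + k = b + a))
              (by exact_mod_cast hca) (by exact_mod_cast h2b)
            calc (a:ℝ)^2 + (b:ℝ)^2 = (b:ℝ)^2 + (a:ℝ)^2 := by ring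
              _ ≤ _ := by exact_mod_cast this
        calc (cliquesIn G (A ∪ B) : ℝ) ≤ (cliquesIn G A : ℝ) + (cliquesIn G B : ℝ) := hcast
          _ ≤ C * (a : ℝ) ^ 2 + C * (b : ℝ) ^ 2 := add_le_add hNA hNB
          _ = C * ((a : ℝ) ^ 2 + (b : ℝ) ^ 2) := by ring
          _ ≤ C * (n : ℝ) ^ 2 := mul_le_mul_of_nonneg_left hab2 (by linarith)
      · push_neg at hbig
        obtain ⟨h2a, h2b⟩ := hbig
        have hnsmall : n ≤ h ^ 2 + 2 * h := by
          have hkh : k ≤ h := hk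
          nlinarith [hsum, h2a, h2b]
        have hNn : (cliquesIn G (A ∪ B) : ℝ) ≤ (2 : ℝ) ^ n := by
          have := cliquesIn_le_two_pow G (A ∪ B)
          exact_mod_cast this
        have hpow : (2 : ℝ) ^ n ≤ (2 : ℝ) ^ (h ^ 2 + 2 * h) :=
          pow_le_pow_right₀ one_le_two hnsmall
        have hCC : (2 : ℝ) ^ (h ^ 2 + 2 * h) ≤ C := le_max_right _ _
        have hn2 : (1 : ℝ) ≤ (n : ℝ) ^ 2 := by
          have : (1 : ℝ) ≤ (n : ℝ) := by exact_mod_cast hn1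
          nlinarith
        calc (cliquesIn G (A ∪ B) : ℝ) ≤ (2 : ℝ) ^ n := hNn
          _ ≤ C := hpow.trans hCC
          _ = C * 1 := by ring
          _ ≤ C * (n : ℝ) ^ 2 := mul_le_mul_of_nonneg_left hn2 (by linarith)


/-- If each base piece on `m` vertices has at most `f(h)·m²` cliques and no `h`-clique,
then a graph obtained from the pieces by `(≤ h)`-sums has at most `f'(h)·n²` cliques,
where `f'(h) = max (f h) 2^{h²+2h}`. -/
theorem clique_count_of_sums {V : Type*} [Fintype V] (G : SimpleGraph V) (h : ℕ)
    (Base : Set V → Prop) (f : ℕ → ℝ)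
    (hbound : ∀ S : Set V, Base S →
      (cliqueCount (G.induce S) : ℝ) ≤ f h * (Nat.card S : ℝ) ^ 2)
    (hfree : ∀ S : Set V, Base S → (G.induce S).CliqueFree h)
    (hbuild : Buildable G h Base Set.univ) :
    (cliqueCount G : ℝ) ≤
      max (f h) (2 ^ (h ^ 2 + 2 * h) : ℝ) * (Fintype.card V : ℝ) ^ 2 := by
  obtain ⟨-, hmain⟩ := clique_count_of_sums_aux G h Base f hbound hbuild
  have h1 : cliqueCount G = cliquesIn G Set.univ := by
    unfold cliqueCount cliquesIn
    exact Nat.card_congr (Equiv.subtypeEquivRight (fun s => ⟨fun hc => ⟨Set.subset_univ _, hc⟩, fun hp => hp.2⟩))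
  have h2 : Nat.card ↥(Set.univ : Set V) = Fintype.card V := by
    rw [Nat.card_coe_set_eq, Set.ncard_univ, Nat.card_eq_fintype_card]
  rw [h1, ← h2]
  exact hmain
end

section
/- If every subgraph of an n-vertex graph G has a vertex of degree at most d, then the number of cliques of G of size exactly r is at most binom(d, r−1) · n for every r ≥ 1. -/
open Finset

private lemma aux_clique_count {V : Type*} [Fintype V] [DecidableEq V] (G : SimpleGraph V)
    [DecidableRel G.Adj] (d : ℕ)
    (hdeg : ∀ s : Set V, s.Nonempty → ∃ v ∈ s, Nat.card {w : V // w ∈ s ∧ G.Adj v w} ≤ d)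
    (r : ℕ) (hr : 1 ≤ r) (s : Finset V) :
    (s.powerset.filter (fun t => G.IsNClique r t)).card ≤ d.choose (r - 1) * s.card := by
  induction s using Finset.strongInduction with
  | _ s ih =>
  rcases s.eq_empty_or_nonempty with rfl | hs
  · have he : ∀ t ∈ (∅ : Finset V).powerset, ¬ G.IsNClique r t := by
      intro t ht
      simp only [Finset.powerset_empty, Finset.mem_singleton] at ht
      subst ht
      intro hcl
      have := hcl.card_eq
      simp at this
      omega
    rw [Finset.filter_false_of_mem he]
    simp
  · obtain ⟨v, hv, hvd⟩ := hdeg (↑s) (by exact ⟨hs.choose, hs.choose_spec⟩)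
    -- neighbors of v in s
    set N : Finset V := s.filter (fun w => G.Adj v w) with hN
    have hNcard : N.card ≤ d := by
      have : Nat.card {w : V // w ∈ (↑s : Set V) ∧ G.Adj v w} = N.card := by
        rw [Nat.card_eq_fintype_card, Fintype.card_subtype]
        congr 1
        ext w
        simp [hN]
      omega
    set A := (s.powerset.filter (fun t => G.IsNClique r t)) with hA
    have hsplit : (A.filter (fun t => v ∈ t)).card + (A.filter (fun t => v ∉ t)).card
        = A.card := Finset.card_filter_add_card_filter_not _
    -- cliques not containing v
    have h1 : (A.filter (fun t => v ∉ t)).card ≤ d.choose (r-1) * (s.erase v).card := by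
      have hsub : A.filter (fun t => v ∉ t) ⊆
          (s.erase v).powerset.filter (fun t => G.IsNClique r t) := by
        intro t ht
        simp only [hA, Finset.mem_filter, Finset.mem_powerset] at ht ⊢
        refine ⟨Finset.subset_erase.mpr ⟨ht.1.1, ht.2⟩, ht.1.2⟩
      exact le_trans (Finset.card_le_card hsub) (ih _ (Finset.erase_ssubset hv))
    -- cliques containing v
    have h2 : (A.filter (fun t => v ∈ t)).card ≤ d.choose (r-1) := by
      have hinj : ∀ t ∈ A.filter (fun t => v ∈ t), t.erase v ∈ N.powersetCard (r-1) := by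
        intro t ht
        simp only [hA, Finset.mem_filter, Finset.mem_powerset] at ht
        obtain ⟨⟨hts, hcl⟩, hvt⟩ := ht
        rw [Finset.mem_powersetCard]
        constructor
        · intro w hw
          rw [Finset.mem_erase] at hw
          rw [hN, Finset.mem_filter]
          exact ⟨hts hw.2, hcl.1 hvt hw.2 (Ne.symm hw.1)⟩
        · rw [Finset.card_erase_of_mem hvt, hcl.card_eq]
      have hcard : (A.filter (fun t => v ∈ t)).card ≤ (N.powersetCard (r-1)).card := by
        apply Finset.card_le_card_of_injOn (fun t => t.erase v) (by intro t ht; exact hinj t ht)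
        intro a ha b hb hab
        simp only [hA, Finset.mem_coe, Finset.mem_filter] at ha hb
        have : insert v (a.erase v) = insert v (b.erase v) := by
          simpa using congrArg (insert v) hab
        rwa [Finset.insert_erase ha.2, Finset.insert_erase hb.2] at this
      calc (A.filter (fun t => v ∈ t)).card ≤ (N.powersetCard (r-1)).card := hcard
        _ = N.card.choose (r-1) := Finset.card_powersetCard _ _
        _ ≤ d.choose (r-1) := Nat.choose_le_choose _ hNcard
    have hse : (s.erase v).card = s.card - 1 := Finset.card_erase_of_mem hv
    have hs1 : 1 ≤ s.card := Finset.card_pos.mpr hs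
    calc A.card ≤ d.choose (r-1) * (s.card - 1) + d.choose (r-1) := by
          rw [← hsplit]; rw [hse] at h1; omega
      _ = d.choose (r-1) * s.card := by
          obtain ⟨k, hk⟩ := Nat.exists_eq_succ_of_ne_zero (by omega : s.card ≠ 0)
          rw [hk]
          simp [Nat.succ_sub_one, Nat.mul_succ]
    
/-- If every nonempty (induced) subgraph of `G` has a vertex of degree at most `d`,
then for every `r ≥ 1` the number of `r`-cliques of `G` is at most `C(d, r-1) · n`. -/
theorem degenerate_r_clique_count {V : Type*} [Fintype V] (G : SimpleGraph V) (d : ℕ)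
    (hdeg : ∀ s : Set V, s.Nonempty → ∃ v ∈ s, Nat.card {w : V // w ∈ s ∧ G.Adj v w} ≤ d)
    (r : ℕ) (hr : 1 ≤ r) :
    Nat.card {s : Finset V // G.IsNClique r s} ≤ d.choose (r - 1) * Fintype.card V := by
  classical
  have := aux_clique_count G d hdeg r hr Finset.univ
  rw [Finset.powerset_univ] at this
  have heq : Nat.card {s : Finset V // G.IsNClique r s}
      = (Finset.univ.filter (fun t => G.IsNClique r t)).card := by
    rw [Nat.card_eq_fintype_card, Fintype.card_subtype]
  rw [heq]
  simpa using this
end
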